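/- Let A be a commutative noetherian ring, S a multiplicative subset, J a finite poset, C a full subcategory of Fun(J, ModFG A), and w = Isom_{S,C}. Then in the Gabriel–Zisman localization w⁻¹C, every morphism from x to y is represented by a fraction f/(s·id_x) where f : x → y is a morphism of C and s ∈ S; moreover, the induced functor w⁻¹C → Fun(J, ModFG S⁻¹A) is fully faithful. -/

import Mathlib

section Diagrams

variable (R : Type) [CommRing R] (J : Type) [PartialOrder J]

/-- A `J`-indexed diagram of `R`-modules (a functor from the poset `J` to `R`-modules). -/
structure Diagram where
  M : J → Type
  [acg : ∀ j, AddCommGroup (M j)]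
  [mod : ∀ j, Module R (M j)]
  map : ∀ {j k : J}, j ≤ k → (M j →ₗ[R] M k)
  map_refl : ∀ j : J, map (le_refl j) = LinearMap.id
  map_trans : ∀ {i j k : J} (h : i ≤ j) (h' : j ≤ k),
    map (le_trans h h') = (map h').comp (map h)

attribute [instance] Diagram.acg Diagram.mod

variable {R J}

/-- A family of linear maps is a morphism of diagrams when it is natural. -/
def IsDiagramHom (x y : Diagram R J) (f : ∀ j, x.M j →ₗ[R] y.M j) : Prop :=
  ∀ (j k : J) (h : j ≤ k), (y.map h).comp (f j) = (f k).comp (x.map h)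

/-- Composition of families of linear maps. -/
def diagComp {x y z : Diagram R J} (g : ∀ j, y.M j →ₗ[R] z.M j)
    (f : ∀ j, x.M j →ₗ[R] y.M j) : ∀ j, x.M j →ₗ[R] z.M j :=
  fun j => (g j).comp (f j)

/-- The identity morphism of a diagram. -/
def diagId (x : Diagram R J) : ∀ j, x.M j →ₗ[R] x.M j := fun _ => LinearMap.id

end Diagrams

section Localized

variable {A : Type} [CommRing A] (S : Submonoid A) {J : Type} [PartialOrder J]

/-- The localization of a linear map, as a map between localized modules. -/
noncomputable def locMap {M N : Type} [AddCommGroup M] [Module A M] [AddCommGroup N]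
    [Module A N] (f : M →ₗ[A] N) : LocalizedModule S M →ₗ[A] LocalizedModule S N :=
  IsLocalizedModule.map S (LocalizedModule.mkLinearMap S M)
    (LocalizedModule.mkLinearMap S N) f

/-- The objectwise localization of a diagram of modules. -/
noncomputable def locDiagram (x : Diagram A J) : Diagram A J where
  M j := LocalizedModule S (x.M j)
  map h := locMap S (x.map h)
  map_refl j := by
    show locMap S (x.map (le_refl j)) = LinearMap.id
    rw [x.map_refl j]
    exact IsLocalizedModule.map_id S _
  map_trans h h' := by
    show locMap S (x.map (le_trans h h')) = LinearMap.comp _ _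
    rw [x.map_trans h h']
    exact IsLocalizedModule.map_comp' S _ _ _ _ _

/-- A morphism of diagrams is a weak isomorphism (belongs to `w = Isom_{S,C}`) when its
objectwise localization is an isomorphism, i.e. bijective in each component. -/
noncomputable def IsLocIso (x y : Diagram A J) (f : ∀ j, x.M j →ₗ[A] y.M j) : Prop :=
  ∀ j, Function.Bijective (locMap S (f j))

end Localized

open CategoryTheory

section Cat

variable (R : Type) [CommRing R] (J : Type) [PartialOrder J] (P : Diagram R J → Prop)

/-- The full subcategory of the category of `J`-diagrams of `R`-modules given by `P`. -/
def DiagCat := {x : Diagram R J // P x}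

instance : Category (DiagCat R J P) where
  Hom x y := {f : ∀ j, x.1.M j →ₗ[R] y.1.M j // IsDiagramHom x.1 y.1 f}
  id x := ⟨diagId x.1, fun j k h => by
    ext m; simp [diagId]⟩
  comp {x y z} f g := ⟨diagComp g.1 f.1, fun j k h => by
    ext m
    have hg := LinearMap.congr_fun (g.2 j k h) (f.1 j m)
    have hf := LinearMap.congr_fun (f.2 j k h) m
    simp only [LinearMap.comp_apply, diagComp] at *
    rw [hg, hf]⟩
  id_comp f := Subtype.ext (funext fun j => LinearMap.comp_id _)
  comp_id f := Subtype.ext (funext fun j => LinearMap.id_comp _)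
  assoc f g h := Subtype.ext (funext fun j => (LinearMap.comp_assoc _ _ _).symm)

end Cat

section LocCat

variable {A : Type} [CommRing A] (S : Submonoid A) {J : Type} [PartialOrder J]
variable {P : Diagram A J → Prop}

/-- The class of weak isomorphisms `w = Isom_{S,C}` on the full subcategory `C`. -/
noncomputable def wSet (P : Diagram A J → Prop) : MorphismProperty (DiagCat A J P) :=
  fun x y f => IsLocIso S x.1 y.1 f.1

/-- The morphism `s • id_x`. -/
def sId (s : A) (x : DiagCat A J P) : x ⟶ x :=
  ⟨fun _ => s • LinearMap.id, fun j k h => by ext m; simp⟩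

/-- The localized diagram, as a diagram of modules over `Localization S`. -/
noncomputable def locDiagramExt (x : Diagram A J) : Diagram (Localization S) J where
  M j := LocalizedModule S (x.M j)
  map h := (locMap S (x.map h)).extendScalarsOfIsLocalization S (Localization S)
  map_refl j := by
    show (locMap S (x.map (le_refl j))).extendScalarsOfIsLocalization S (Localization S) =
      LinearMap.id
    rw [x.map_refl j]
    rw [show locMap S (LinearMap.id : x.M j →ₗ[A] x.M j) = LinearMap.id from
      IsLocalizedModule.map_id S _]
    rfl
  map_trans {i j k} h h' := by
    show (locMap S (x.map (le_trans h h'))).extendScalarsOfIsLocalization S (Localization S)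
      = LinearMap.comp _ _
    rw [x.map_trans h h']
    rw [show locMap S ((x.map h').comp (x.map h)) = (locMap S (x.map h')).comp
      (locMap S (x.map h)) from IsLocalizedModule.map_comp' S _ _ _ _ _]
    rfl

/-- The objectwise localization functor from `C` to the category of diagrams of
`S⁻¹A`-modules. -/
noncomputable def locFunctor :
    DiagCat A J P ⥤ DiagCat (Localization S) J (fun _ => True) where
  obj x := ⟨locDiagramExt S x.1, trivial⟩
  map {x y} f := ⟨fun j => (locMap S (f.1 j)).extendScalarsOfIsLocalization S
      (Localization S), by
    intro j k h
    have e : (locMap S (y.1.map h)).comp (locMap S (f.1 j)) =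
        (locMap S (f.1 k)).comp (locMap S (x.1.map h)) := by
      simp only [locMap]
      rw [← IsLocalizedModule.map_comp', ← IsLocalizedModule.map_comp']
      exact congrArg _ (f.2 j k h)
    exact LinearMap.ext fun m => LinearMap.congr_fun e m⟩
  map_id x := Subtype.ext (funext fun j => by
    show (locMap S (LinearMap.id : x.1.M j →ₗ[A] x.1.M j)).extendScalarsOfIsLocalization S
      (Localization S) = LinearMap.id
    rw [show locMap S (LinearMap.id : x.1.M j →ₗ[A] x.1.M j) = LinearMap.id from
      IsLocalizedModule.map_id S _]
    rfl)
  map_comp {x y z} f g := Subtype.ext (funext fun j => by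
    show (locMap S ((g.1 j).comp (f.1 j))).extendScalarsOfIsLocalization S (Localization S)
      = LinearMap.comp _ _
    rw [show locMap S ((g.1 j).comp (f.1 j)) = (locMap S (g.1 j)).comp (locMap S (f.1 j))
      from IsLocalizedModule.map_comp' S _ _ _ _ _]
    rfl)

end LocCat

/-! Over a noetherian ring a finitely generated module `M` is finitely presented, so
`S⁻¹ Hom(M, N) ≅ Hom(S⁻¹M, S⁻¹N)`. As `J` is finite, a natural family of maps between the
localized diagrams of `x` and `y` becomes, after multiplication by a single `s ∈ S`, the
localization of a morphism `f : x ⟶ y`; and two morphisms with the same localization agree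
after precomposition with some `s • id`. Applied to the inverse of the localization of `t ∈ w`,
this gives `g ≫ t = s • id`, so the generators `Q f` and `(Q t)⁻¹` of `w⁻¹C`, and hence all its
morphisms, are fractions `f / (s • id)`. Full faithfulness of the induced functor follows from
the same two facts. -/

lemma Submonoid.exists_mem_forall_of_finite {M : Type*} [CommMonoid M] (S : Submonoid M)
    {ι : Type*} [Finite ι] {p : ι → M → Prop} (h : ∀ i, ∃ s ∈ S, p i s)
    (hmul : ∀ i s t, t ∈ S → p i s → p i (t * s)) : ∃ s ∈ S, ∀ i, p i s := by
  classical
  have := Fintype.ofFinite ι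
  choose s hsS hs using h
  refine ⟨∏ i, s i, S.prod_mem fun i _ => hsS i, fun i => ?_⟩
  rw [← Finset.prod_erase_mul Finset.univ s (Finset.mem_univ i)]
  exact hmul i _ _ (S.prod_mem fun j _ => hsS j) (hs i)

section LocMap

variable {A : Type} [CommRing A] (S : Submonoid A)
variable {M N K : Type} [AddCommGroup M] [Module A M] [AddCommGroup N] [Module A N]
  [AddCommGroup K] [Module A K]

lemma locMap_id : locMap S (LinearMap.id : M →ₗ[A] M) = LinearMap.id :=
  IsLocalizedModule.map_id S _

lemma locMap_comp (g : N →ₗ[A] K) (f : M →ₗ[A] N) :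
    locMap S (g ∘ₗ f) = locMap S g ∘ₗ locMap S f :=
  IsLocalizedModule.map_comp' S _ _ _ _ _

lemma locMap_smul (s : A) (f : M →ₗ[A] N) : locMap S (s • f) = s • locMap S f :=
  map_smul _ s f

lemma locMap_smul_id (s : A) : locMap S (s • LinearMap.id : M →ₗ[A] M) = s • LinearMap.id := by
  rw [locMap_smul, locMap_id]

lemma bijective_locMap_smul_id {s : A} (hs : s ∈ S) :
    Function.Bijective (locMap S (s • LinearMap.id : M →ₗ[A] M)) := by
  rw [locMap_smul_id]
  exact (Module.End.isUnit_iff _).mp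
    (IsLocalizedModule.map_units (LocalizedModule.mkLinearMap S M) ⟨s, hs⟩)

lemma locMap_comp_mkLinearMap (f : M →ₗ[A] N) :
    locMap S f ∘ₗ LocalizedModule.mkLinearMap S M = LocalizedModule.mkLinearMap S N ∘ₗ f :=
  IsLocalizedModule.map_comp S _ _ f

lemma exists_smul_eq_smul_of_locMap_eq [Module.Finite A M] {f g : M →ₗ[A] N}
    (h : locMap S f = locMap S g) : ∃ s ∈ S, s • f = s • g := by
  obtain ⟨s, hs⟩ := Module.Finite.exists_smul_of_comp_eq_of_isLocalizedModule S
    (LocalizedModule.mkLinearMap S N) f g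
    (by rw [← locMap_comp_mkLinearMap, ← locMap_comp_mkLinearMap, h])
  exact ⟨s, s.2, hs⟩

lemma exists_smul_eq_locMap [Module.FinitePresentation A M]
    (ψ : LocalizedModule S M →ₗ[A] LocalizedModule S N) :
    ∃ s ∈ S, ∃ f : M →ₗ[A] N, s • ψ = locMap S f := by
  obtain ⟨⟨f, s⟩, hf⟩ := IsLocalizedModule.surj S (IsLocalizedModule.map S
    (LocalizedModule.mkLinearMap S M) (LocalizedModule.mkLinearMap S N)) ψ
  exact ⟨s, s.2, f, hf⟩

end LocMap

section Families

variable {A : Type} [CommRing A] (S : Submonoid A) {ι : Type} [Finite ι]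
variable {M N : ι → Type} [∀ i, AddCommGroup (M i)] [∀ i, Module A (M i)]
  [∀ i, AddCommGroup (N i)] [∀ i, Module A (N i)]

lemma exists_smul_eq_smul_of_forall_locMap_eq [∀ i, Module.Finite A (M i)]
    (f g : ∀ i, M i →ₗ[A] N i) (h : ∀ i, locMap S (f i) = locMap S (g i)) :
    ∃ s ∈ S, ∀ i, s • f i = s • g i :=
  S.exists_mem_forall_of_finite (fun i => exists_smul_eq_smul_of_locMap_eq S (h i))
    fun i s t _ hs => by rw [mul_smul, mul_smul, hs]

lemma exists_smul_eq_forall_locMap [∀ i, Module.FinitePresentation A (M i)]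
    (ψ : ∀ i, LocalizedModule S (M i) →ₗ[A] LocalizedModule S (N i)) :
    ∃ s ∈ S, ∃ f : ∀ i, M i →ₗ[A] N i, ∀ i, s • ψ i = locMap S (f i) := by
  obtain ⟨s, hsS, hs⟩ := S.exists_mem_forall_of_finite (fun i => exists_smul_eq_locMap S (ψ i))
    fun i s t _ ⟨f, hf⟩ => ⟨t • f, by rw [mul_smul, hf, locMap_smul]⟩
  choose f hf using hs
  exact ⟨s, hsS, f, hf⟩

end Families

lemma Diagram.exists_isDiagramHom_smul_eq_locMap {A : Type} [CommRing A] (S : Submonoid A)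
    {J : Type} [PartialOrder J] [Finite J] (x y : Diagram A J)
    [∀ j, Module.FinitePresentation A (x.M j)]
    (ψ : ∀ j, LocalizedModule S (x.M j) →ₗ[A] LocalizedModule S (y.M j))
    (hψ : ∀ (j k : J) (h : j ≤ k), locMap S (y.map h) ∘ₗ ψ j = ψ k ∘ₗ locMap S (x.map h)) :
    ∃ f, IsDiagramHom x y f ∧ ∃ s ∈ S, ∀ j, s • ψ j = locMap S (f j) := by
  obtain ⟨σ, hσ, g, hg⟩ := exists_smul_eq_forall_locMap S ψ
  -- `g` is natural after localization, hence after multiplication by some `u ∈ S`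
  obtain ⟨u, hu, hgu⟩ := exists_smul_eq_smul_of_forall_locMap_eq S
    (ι := {p : J × J // p.1 ≤ p.2}) (fun p => y.map p.2 ∘ₗ g p.1.1)
    (fun p => g p.1.2 ∘ₗ x.map p.2) fun ⟨(j, k), h⟩ => by
      rw [locMap_comp, locMap_comp, ← hg j, ← hg k, LinearMap.comp_smul, LinearMap.smul_comp]
      exact congrArg _ (hψ j k h)
  refine ⟨fun j => u • g j, fun j k h => ?_, u * σ, S.mul_mem hu hσ, fun j => ?_⟩
  · rw [LinearMap.comp_smul, LinearMap.smul_comp]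
    exact hgu ⟨(j, k), h⟩
  · rw [mul_smul, hg j, locMap_smul]

section DiagCat

variable {A : Type} [CommRing A] (S : Submonoid A) {J : Type} [PartialOrder J]
variable {P : Diagram A J → Prop}

@[ext]
lemma DiagCat.hom_ext {x y : DiagCat A J P} {f g : x ⟶ y} (h : ∀ j, f.1 j = g.1 j) : f = g :=
  Subtype.ext (funext h)

@[simp]
lemma DiagCat.comp_val {x y z : DiagCat A J P} (f : x ⟶ y) (g : y ⟶ z) (j : J) :
    (f ≫ g).1 j = g.1 j ∘ₗ f.1 j :=
  rfl

@[simp]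
lemma sId_val (s : A) (x : DiagCat A J P) (j : J) : (sId s x).1 j = s • LinearMap.id :=
  rfl

lemma sId_one (x : DiagCat A J P) : sId 1 x = 𝟙 x := by
  ext j : 1
  exact one_smul A _

lemma sId_comp_sId (s t : A) (x : DiagCat A J P) : sId s x ≫ sId t x = sId (s * t) x := by
  ext j : 1
  simp only [DiagCat.comp_val, sId_val, LinearMap.smul_comp, LinearMap.id_comp, smul_smul,
    mul_comm t s]

lemma sId_comp (s : A) {x y : DiagCat A J P} (f : x ⟶ y) : sId s x ≫ f = f ≫ sId s y := by
  ext j : 1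
  simp only [DiagCat.comp_val, sId_val, LinearMap.comp_smul, LinearMap.smul_comp,
    LinearMap.comp_id, LinearMap.id_comp]

lemma sId_mem_wSet {s : A} (hs : s ∈ S) (x : DiagCat A J P) : wSet S P (sId s x) :=
  fun _ => bijective_locMap_smul_id S hs

lemma locMap_eq_of_locFunctor_map_eq {x y : DiagCat A J P} {f g : x ⟶ y}
    (h : (locFunctor S).map f = (locFunctor S).map g) (j : J) :
    locMap S (f.1 j) = locMap S (g.1 j) :=
  LinearMap.ext fun m => LinearMap.congr_fun (congrFun (congrArg Subtype.val h) j) m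

variable [Finite J]

lemma exists_sId_comp_eq_of_locFunctor_map_eq {x y : DiagCat A J P}
    [∀ j, Module.Finite A (x.1.M j)] {f g : x ⟶ y}
    (h : (locFunctor S).map f = (locFunctor S).map g) :
    ∃ s ∈ S, sId s x ≫ f = sId s x ≫ g := by
  obtain ⟨s, hs, hfg⟩ := exists_smul_eq_smul_of_forall_locMap_eq S _ _
    (locMap_eq_of_locFunctor_map_eq S h)
  refine ⟨s, hs, DiagCat.hom_ext fun j => ?_⟩
  simpa only [DiagCat.comp_val, sId_val, LinearMap.comp_smul, LinearMap.comp_id] using hfg j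

lemma exists_locFunctor_map_sId_comp_eq (x y : DiagCat A J P)
    [∀ j, Module.FinitePresentation A (x.1.M j)]
    (ψ : (locFunctor S).obj x ⟶ (locFunctor S).obj y) :
    ∃ (f : x ⟶ y) (s : A) (_ : s ∈ S),
      (locFunctor S).map (sId s x) ≫ ψ = (locFunctor S).map f := by
  let ψ' : ∀ j, LocalizedModule S (x.1.M j) →ₗ[Localization S] LocalizedModule S (y.1.M j) :=
    ψ.1
  obtain ⟨f, hf, s, hs, hψf⟩ := Diagram.exists_isDiagramHom_smul_eq_locMap S x.1 y.1
    (fun j => (ψ' j).restrictScalars A)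
    fun j k h => LinearMap.ext fun m => LinearMap.congr_fun (ψ.2 j k h) m
  refine ⟨⟨f, hf⟩, s, hs, DiagCat.hom_ext fun j => LinearMap.ext fun m => ?_⟩
  change ψ' j (locMap S (s • LinearMap.id) m) = locMap S (f j) m
  rw [locMap_smul_id, ← hψf j]
  exact (ψ' j).map_smul_of_tower s m

lemma exists_comp_eq_sId_of_wSet (hL : (wSet S P).IsInvertedBy (locFunctor S))
    {z x : DiagCat A J P} [∀ j, Module.FinitePresentation A (x.1.M j)]
    (t : z ⟶ x) (ht : wSet S P t) :
    ∃ (g : x ⟶ z) (s : A) (_ : s ∈ S), g ≫ t = sId s x := by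
  have := hL t ht
  obtain ⟨g, s, hs, hg⟩ := exists_locFunctor_map_sId_comp_eq S x z (inv ((locFunctor S).map t))
  obtain ⟨u, hu, hgu⟩ := exists_sId_comp_eq_of_locFunctor_map_eq S (f := g ≫ t) (g := sId s x)
    (by rw [Functor.map_comp, ← hg, Category.assoc, IsIso.inv_hom_id, Category.comp_id])
  exact ⟨sId u x ≫ g, u * s, S.mul_mem hu hs, by rw [Category.assoc, hgu, sId_comp_sId]⟩

end DiagCat

section Fractions

variable {A : Type} [CommRing A] (S : Submonoid A) {J : Type} [PartialOrder J]
variable {P : Diagram A J → Prop}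

open Localization.Construction

lemma isIso_Q_map_sId {s : A} (hs : s ∈ S) (x : DiagCat A J P) :
    IsIso ((wSet S P).Q.map (sId s x)) :=
  MorphismProperty.Q_inverts _ _ (sId_mem_wSet S hs x)

lemma lift_locFunctor_map_Q_map (hL : (wSet S P).IsInvertedBy (locFunctor S))
    {x y : DiagCat A J P} (f : x ⟶ y) :
    (lift (locFunctor S) hL).map ((wSet S P).Q.map f) = (locFunctor S).map f := by
  refine (Functor.congr_hom (fac (locFunctor S) hL) f).trans ?_
  erw [eqToHom_refl, eqToHom_refl, Category.id_comp, Category.comp_id]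

lemma Q_map_sId_mul_comp_eq {x y : DiagCat A J P} {φ : (wSet S P).Q.obj x ⟶ (wSet S P).Q.obj y}
    {s : A} {f : x ⟶ y} (h : (wSet S P).Q.map (sId s x) ≫ φ = (wSet S P).Q.map f) (t : A) :
    (wSet S P).Q.map (sId (t * s) x) ≫ φ = (wSet S P).Q.map (sId t x ≫ f) := by
  rw [← sId_comp_sId, Functor.map_comp, Category.assoc, h, Functor.map_comp]

lemma Q_map_sId_comp_comp_eq {x y z : DiagCat A J P} {φ : (wSet S P).Q.obj x ⟶ (wSet S P).Q.obj y}
    {ψ : (wSet S P).Q.obj y ⟶ (wSet S P).Q.obj z} {s t : A} {f : x ⟶ y} {g : y ⟶ z}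
    (hf : (wSet S P).Q.map (sId s x) ≫ φ = (wSet S P).Q.map f)
    (hg : (wSet S P).Q.map (sId t y) ≫ ψ = (wSet S P).Q.map g) :
    (wSet S P).Q.map (sId (t * s) x) ≫ φ ≫ ψ = (wSet S P).Q.map (f ≫ g) := by
  rw [← Category.assoc, Q_map_sId_mul_comp_eq S hf, sId_comp, Functor.map_comp,
    Category.assoc, hg, ← Functor.map_comp]

variable [Finite J]

lemma exists_Q_map_sId_comp_eq
    (hfp : ∀ z, P z → ∀ j, Module.FinitePresentation A (z.M j))
    (hL : (wSet S P).IsInvertedBy (locFunctor S)) (x y : DiagCat A J P)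
    (φ : (wSet S P).Q.obj x ⟶ (wSet S P).Q.obj y) :
    ∃ (f : x ⟶ y) (s : A) (_ : s ∈ S), (wSet S P).Q.map (sId s x) ≫ φ = (wSet S P).Q.map f := by
  let e := (objEquiv (wSet S P)).symm
  let IsFraction : MorphismProperty (wSet S P).Localization := fun X Y φ =>
    ∃ (f : e X ⟶ e Y) (s : A) (_ : s ∈ S), (wSet S P).Q.map (sId s (e X)) ≫ φ = (wSet S P).Q.map f
  have : IsFraction.IsStableUnderComposition := ⟨by
    rintro ⟨⟨X⟩⟩ ⟨⟨Y⟩⟩ ⟨⟨Z⟩⟩ φ ψ ⟨f, s, hs, hf⟩ ⟨g, t, ht, hg⟩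
    exact ⟨f ≫ g, t * s, S.mul_mem ht hs, Q_map_sId_comp_comp_eq S hf hg⟩⟩
  have hQ : ∀ ⦃X Y : DiagCat A J P⦄ (f : X ⟶ Y), IsFraction ((wSet S P).Q.map f) := by
    intro X Y f
    have : (wSet S P).Q.map (sId 1 X) ≫ (wSet S P).Q.map f = (wSet S P).Q.map f := by
      rw [sId_one, CategoryTheory.Functor.map_id, Category.id_comp]
    exact ⟨f, 1, S.one_mem, this⟩
  have hwInv : ∀ ⦃X Y : DiagCat A J P⦄ (w : X ⟶ Y) (hw : wSet S P w), IsFraction (wInv w hw) := by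
    intro X Y w hw
    have := hfp Y.1 Y.2
    obtain ⟨g, s, hs, hg⟩ := exists_comp_eq_sId_of_wSet S hL w hw
    have hw' : (wSet S P).Q.map w ≫ wInv w hw = 𝟙 _ := (wIso w hw).hom_inv_id
    have : (wSet S P).Q.map (sId s Y) ≫ wInv w hw = (wSet S P).Q.map g := by
      rw [← hg, Functor.map_comp, Category.assoc, hw', Category.comp_id]
    exact ⟨g, s, hs, this⟩
  have hφ : IsFraction φ := by
    rw [morphismProperty_eq_top IsFraction hQ hwInv]
    trivial
  exact hφ

end Fractions

section FullyFaithful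

variable {A : Type} [CommRing A] (S : Submonoid A) {J : Type} [PartialOrder J] [Finite J]
variable {P : Diagram A J → Prop}

open Localization.Construction

lemma full_lift_locFunctor (hfp : ∀ z, P z → ∀ j, Module.FinitePresentation A (z.M j))
    (hL : (wSet S P).IsInvertedBy (locFunctor S)) :
    (lift (locFunctor S) hL).Full where
  map_surjective {X Y} ψ := by
    obtain ⟨x, rfl⟩ : ∃ x, (wSet S P).Q.obj x = X := (objEquiv (wSet S P)).surjective X
    obtain ⟨y, rfl⟩ : ∃ y, (wSet S P).Q.obj y = Y := (objEquiv (wSet S P)).surjective Y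
    have := hfp x.1 x.2
    obtain ⟨f, s, hs, hf⟩ := exists_locFunctor_map_sId_comp_eq S x y ψ
    have := isIso_Q_map_sId S hs x
    refine ⟨inv ((wSet S P).Q.map (sId s x)) ≫ (wSet S P).Q.map f, ?_⟩
    rw [Functor.map_comp, Functor.map_inv, IsIso.inv_comp_eq, lift_locFunctor_map_Q_map,
      lift_locFunctor_map_Q_map]
    exact hf.symm

lemma faithful_lift_locFunctor (hfp : ∀ z, P z → ∀ j, Module.FinitePresentation A (z.M j))
    (hL : (wSet S P).IsInvertedBy (locFunctor S)) :
    (lift (locFunctor S) hL).Faithful where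
  map_injective {X Y} φ ψ h := by
    obtain ⟨x, rfl⟩ : ∃ x, (wSet S P).Q.obj x = X := (objEquiv (wSet S P)).surjective X
    obtain ⟨y, rfl⟩ : ∃ y, (wSet S P).Q.obj y = Y := (objEquiv (wSet S P)).surjective Y
    obtain ⟨f, s, hs, hf⟩ := exists_Q_map_sId_comp_eq S hfp hL x y φ
    obtain ⟨g, t, ht, hg⟩ := exists_Q_map_sId_comp_eq S hfp hL x y ψ
    -- bring both fractions to the common denominator `t * s`
    have hf' := Q_map_sId_mul_comp_eq S hf t
    have hg' := Q_map_sId_mul_comp_eq S hg s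
    rw [mul_comm] at hg'
    have := hfp x.1 x.2
    obtain ⟨u, hu, hfg⟩ := exists_sId_comp_eq_of_locFunctor_map_eq S
      (f := sId t x ≫ f) (g := sId s x ≫ g) (by
        rw [← lift_locFunctor_map_Q_map S hL, ← hf', ← lift_locFunctor_map_Q_map S hL, ← hg',
          Functor.map_comp, Functor.map_comp, h])
    have := isIso_Q_map_sId S hu x
    have := isIso_Q_map_sId S (S.mul_mem ht hs) x
    rw [← cancel_epi ((wSet S P).Q.map (sId (t * s) x)), ← cancel_epi ((wSet S P).Q.map (sId u x)),
      hf', hg', ← Functor.map_comp, ← Functor.map_comp, hfg]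

end FullyFaithful

/-- in the Gabriel–Zisman localization `w⁻¹C` of a full subcategory `C` of
diagrams of finitely generated modules over a noetherian ring at the class `w` of
morphisms inverted by localization at `S`, every morphism is represented by a fraction
`f/(s • id)` with `s ∈ S`, and the induced functor `w⁻¹C ⥤ Fun(J, Mod S⁻¹A)` is fully
faithful. -/
theorem localization_fraction_representation_and_fullyFaithful
    (A : Type) [CommRing A] [IsNoetherianRing A] (S : Submonoid A)
    (ι : Type) [Fintype ι] (I : ι → Type) [∀ i, Fintype (I i)] [∀ i, LinearOrder (I i)]
    (P : Diagram A (∀ i, I i) → Prop)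
    (hfin : ∀ z, P z → ∀ j, Module.Finite A (z.M j))
    (hL : (wSet S P).IsInvertedBy (locFunctor S (P := P))) :
    -- every morphism of `w⁻¹C` is represented by a fraction `f/(s • id)`
    (∀ (x y : DiagCat A (∀ i, I i) P)
      (φ : (wSet S P).Q.obj x ⟶ (wSet S P).Q.obj y),
      ∃ (f : x ⟶ y) (s : A) (_ : s ∈ S),
        (wSet S P).Q.map (sId s x) ≫ φ = (wSet S P).Q.map f) ∧
    -- the induced functor `w⁻¹C ⥤ Fun(J, Mod S⁻¹A)` is fully faithful
    (Localization.Construction.lift (locFunctor S (P := P)) hL).Full ∧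
    (Localization.Construction.lift (locFunctor S (P := P)) hL).Faithful := by
  have hfp : ∀ z, P z → ∀ j, Module.FinitePresentation A (z.M j) := fun z hz j =>
    have := hfin z hz j
    Module.finitePresentation_of_finite A _
  exact ⟨exists_Q_map_sId_comp_eq S hfp hL, full_lift_locFunctor S hfp hL,
    faithful_lift_locFunctor S hfp hL⟩
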